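/- arXiv:1312.5841 — 4 statements merged into one kernel-verified Lean document; each statement's English description precedes it below -/
import Mathlib

section
/- Let p : ℝ → ℝ be a continuously differentiable, strictly positive probability density such that ∫_ℝ x² p(x) dx = 1, x·p(x) → 0 as x → ±∞, and J := ∫_ℝ (p'(x))²/p(x) dx < ∞. Then J ≥ 1, with equality if and only if p(x) = e^{−x²/2}/√(2π) for almost every x ∈ ℝ. -/
/-!
Completing the square, `(p' + x p)² / p = p'² / p + 2 x p' + x² p`, and integrating by parts,
`∫ x p' = -∫ p = -1`, give `∫ (p' + x p)² / p = J - 2 + 1 = J - 1 ≥ 0`. Equality forces the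
continuous integrand to vanish, i.e. `p' = -x p`, whose only probability density solution is
the standard Gaussian.
-/

open MeasureTheory Filter Real

lemma sq_add_mul_div_eq {c : ℝ} (hc : c ≠ 0) (a b : ℝ) :
    (b + a * c) ^ 2 / c = b ^ 2 / c + 2 * (a * b) + a ^ 2 * c := by
  field_simp
  ring

lemma abs_mul_le_of_pos {c : ℝ} (hc : 0 < c) (a b : ℝ) :
    |a * b| ≤ (a ^ 2 * c + b ^ 2 / c) / 2 := by
  have hplus : 0 ≤ (b + a * c) ^ 2 / c := by positivity
  have hminus : 0 ≤ (b + (-a) * c) ^ 2 / c := by positivity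
  rw [sq_add_mul_div_eq hc.ne'] at hplus hminus
  rw [abs_le]
  constructor <;> nlinarith

lemma integral_exp_neg_sq_div_two : ∫ x : ℝ, exp (-x ^ 2 / 2) = √(2 * π) := by
  simp_rw [show ∀ x : ℝ, -x ^ 2 / 2 = -(1 / 2) * x ^ 2 by intro x; ring]
  rw [integral_gaussian]
  congr 1
  ring

lemma hasDerivAt_exp_neg_sq_div_two_div (c x : ℝ) :
    HasDerivAt (fun y => exp (-y ^ 2 / 2) / c) (-x * (exp (-x ^ 2 / 2) / c)) x := by
  refine ((((hasDerivAt_pow 2 x).neg.div_const 2).exp).div_const c).congr_deriv ?_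
  simp only [Pi.neg_apply, Nat.cast_ofNat, Nat.add_one_sub_one, pow_one]
  ring

lemma eq_mul_exp_of_deriv_eq_neg_mul {p : ℝ → ℝ} (hp : Differentiable ℝ p)
    (hode : ∀ x, deriv p x = -x * p x) (x : ℝ) : p x = p 0 * exp (-x ^ 2 / 2) := by
  have hconst : ∀ y, HasDerivAt (fun y => p y * exp (y ^ 2 / 2)) 0 y := by
    intro y
    refine ((hp y).hasDerivAt.mul ((hasDerivAt_pow 2 y).div_const 2).exp).congr_deriv ?_
    rw [hode y]
    simp only [Nat.cast_ofNat, Nat.add_one_sub_one, pow_one, ne_eq, OfNat.ofNat_ne_zero,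
      not_false_eq_true, mul_div_cancel_left₀]
    ring
  have h := is_const_of_deriv_eq_zero (fun y => (hconst y).differentiableAt)
    (fun y => (hconst y).deriv) x 0
  simp only [ne_eq, OfNat.ofNat_ne_zero, not_false_eq_true, zero_pow, zero_div, exp_zero,
    mul_one] at h
  rw [← h, mul_assoc, ← exp_add, neg_div, add_neg_cancel, exp_zero, mul_one]

lemma eq_gaussian_of_deriv_eq_neg_mul {p : ℝ → ℝ} (hp : Differentiable ℝ p)
    (hode : ∀ x, deriv p x = -x * p x) (hp1 : ∫ x, p x = 1) (x : ℝ) :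
    p x = exp (-x ^ 2 / 2) / √(2 * π) := by
  have hp0 : p 0 * √(2 * π) = 1 := by
    rw [← hp1, ← integral_exp_neg_sq_div_two, ← integral_const_mul]
    exact integral_congr_ae (ae_of_all _ fun y => (eq_mul_exp_of_deriv_eq_neg_mul hp hode y).symm)
  rw [eq_mul_exp_of_deriv_eq_neg_mul hp hode x, eq_div_iff (by positivity), mul_right_comm, hp0,
    one_mul]

section FisherInformation

variable {p : ℝ → ℝ}

lemma integral_id_mul_deriv (hp : Differentiable ℝ p)
    (hxp' : Integrable fun x => x * deriv p x) (hip : Integrable p)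
    (htop : Tendsto (fun x => x * p x) atTop (nhds 0))
    (hbot : Tendsto (fun x => x * p x) atBot (nhds 0)) :
    ∫ x, x * deriv p x = -∫ x, p x := by
  have h := integral_mul_deriv_eq_deriv_mul (u := fun x => x) (u' := fun _ => (1 : ℝ))
    (fun x _ => hasDerivAt_id x) (fun x _ => (hp x).hasDerivAt) hxp'
    (by simpa [Pi.mul_def] using hip) hbot htop
  simpa using h

variable (hpos : ∀ x, 0 < p x) (hmom : Integrable fun x => x ^ 2 * p x)
  (hJ : Integrable fun x => deriv p x ^ 2 / p x)
include hpos hmom hJ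

lemma integrable_id_mul_deriv : Integrable fun x => x * deriv p x := by
  refine ((hmom.add hJ).div_const 2).mono
    (measurable_id.mul (measurable_deriv p)).aestronglyMeasurable (ae_of_all _ fun x => ?_)
  rw [Real.norm_eq_abs, Real.norm_eq_abs]
  exact (abs_mul_le_of_pos (hpos x) _ _).trans (le_abs_self _)

lemma integrable_sq_deriv_add_mul_div :
    Integrable fun x => (deriv p x + x * p x) ^ 2 / p x := by
  simp_rw [sq_add_mul_div_eq (hpos _).ne']
  exact (hJ.add ((integrable_id_mul_deriv hpos hmom hJ).const_mul 2)).add hmom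

lemma integral_sq_deriv_add_mul_div :
    ∫ x, (deriv p x + x * p x) ^ 2 / p x
      = (∫ x, deriv p x ^ 2 / p x) + 2 * (∫ x, x * deriv p x) + ∫ x, x ^ 2 * p x := by
  have hxp' := (integrable_id_mul_deriv hpos hmom hJ).const_mul 2
  simp_rw [sq_add_mul_div_eq (hpos _).ne']
  rw [integral_add (by exact hJ.add hxp') hmom, integral_add hJ hxp', integral_const_mul]

end FisherInformation

lemma deriv_eq_neg_mul_of_integral_sq_deriv_add_mul_div_eq_zero {p : ℝ → ℝ}
    (hp : ContDiff ℝ 1 p) (hpos : ∀ x, 0 < p x)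
    (hint : Integrable fun x => (deriv p x + x * p x) ^ 2 / p x)
    (h0 : ∫ x, (deriv p x + x * p x) ^ 2 / p x = 0) (x : ℝ) :
    deriv p x = -x * p x := by
  have hcont : Continuous fun x => (deriv p x + x * p x) ^ 2 / p x := by
    have hp' := hp.continuous_deriv le_rfl
    exact Continuous.div (by fun_prop) hp.continuous fun x => (hpos x).ne'
  have hae := (integral_eq_zero_iff_of_nonneg (fun x => by positivity [hpos x]) hint).mp h0
  have hzero := congrFun ((hcont.ae_eq_iff_eq volume continuous_zero).mp hae) x
  simp only [Pi.zero_apply, div_eq_zero_iff, (hpos x).ne', or_false, ne_eq,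
    OfNat.ofNat_ne_zero, not_false_eq_true, pow_eq_zero_iff] at hzero
  linarith

/-- Among unit-variance densities, the standard Gaussian minimizes Fisher information:
`J = ∫ (p')²/p ≥ 1`, with equality iff `p` is the standard Gaussian density a.e. -/
theorem fisher_information_ge_one
    (p : ℝ → ℝ) (hp : ContDiff ℝ 1 p) (hpos : ∀ x, 0 < p x)
    (hp1 : ∫ x, p x = 1) (hvar : ∫ x, x ^ 2 * p x = 1)
    (htail_top : Tendsto (fun x => x * p x) atTop (nhds 0))
    (htail_bot : Tendsto (fun x => x * p x) atBot (nhds 0))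
    (hJ : Integrable (fun x => (deriv p x) ^ 2 / p x)) :
    1 ≤ ∫ x, (deriv p x) ^ 2 / p x ∧
      ((∫ x, (deriv p x) ^ 2 / p x) = 1 ↔
        ∀ᵐ x : ℝ, p x = Real.exp (-x ^ 2 / 2) / Real.sqrt (2 * π)) := by
  have hdiff : Differentiable ℝ p := hp.differentiable one_ne_zero
  have hmom : Integrable fun x => x ^ 2 * p x := integrable_of_integral_eq_one hvar
  have hdefect : ∫ x, (deriv p x + x * p x) ^ 2 / p x = (∫ x, deriv p x ^ 2 / p x) - 1 := by
    rw [integral_sq_deriv_add_mul_div hpos hmom hJ,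
      integral_id_mul_deriv hdiff (integrable_id_mul_deriv hpos hmom hJ)
        (integrable_of_integral_eq_one hp1) htail_top htail_bot, hp1, hvar]
    ring
  have hnonneg : 0 ≤ ∫ x, (deriv p x + x * p x) ^ 2 / p x :=
    integral_nonneg fun x => by positivity [hpos x]
  refine ⟨by linarith, fun hJ1 => ae_of_all _ fun x => ?_, fun hgauss => ?_⟩
  · have hode := deriv_eq_neg_mul_of_integral_sq_deriv_add_mul_div_eq_zero hp hpos
      (integrable_sq_deriv_add_mul_div hpos hmom hJ) (by linarith)
    exact eq_gaussian_of_deriv_eq_neg_mul hdiff hode hp1 x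
  · have hp_eq : p = fun x => exp (-x ^ 2 / 2) / √(2 * π) :=
      (hp.continuous.ae_eq_iff_eq volume (by fun_prop)).mp hgauss
    have hode : ∀ x, deriv p x = -x * p x := fun x => by
      rw [hp_eq]
      exact (hasDerivAt_exp_neg_sq_div_two_div _ x).deriv
    have hscore : (fun x => deriv p x ^ 2 / p x) = fun x => x ^ 2 * p x := funext fun x => by
      rw [hode x]
      field_simp [(hpos x).ne']
    rw [hscore, hvar]
end

section
/- Let p : ℝ → ℝ be a continuously differentiable, strictly positive probability density with ∫_ℝ x p(x) dx = 0, ∫_ℝ x² p(x) dx = 1, x·p(x) → 0 as x → ±∞, and J := ∫_ℝ (p'(x))²/p(x) dx < ∞. Let φ(x) = e^{−x²/2}/√(2π) denote the standard Gaussian density. Then the relative entropy satisfies ∫_ℝ p(x) log(p(x)/φ(x)) dx ≤ (1/2)(J − 1). -/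
/-!
Cordero-Erausquin's transport proof of the Gaussian log-Sobolev inequality. Let `T` be the
increasing map pushing `p` forward to the Gaussian density `φ`, so that `p = φ(T) T'`. Then
`log (p / φ) = (x² - T²) / 2 + log T'`, and `log T' ≤ T' - 1` together with completing a square
gives, pointwise, `p log (p / φ) ≤ (p T)' + (p'² / p + x² p) / 2 - p`. Integrating, the right side
contributes `J / 2 + 1 / 2 - 1`, provided the boundary term `p T` vanishes at `±∞`. It does:
Cauchy-Schwarz gives `p(x)² ≤ J ∫_x^∞ p = J ∫_{T x}^∞ φ`, and `T² ∫_T^∞ φ ≤ ∫_T^∞ s² φ(s) ds → 0`.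
The same pointwise bound, with `p log (p / φ) ≥ p - φ`, shows that the entropy integrand is
integrable.
-/

open MeasureTheory Filter Real Set Topology ProbabilityTheory

section BoundaryTerm

variable {f g W W' : ℝ → ℝ}

theorem intervalIntegral_le_sub_add_of_le_deriv_add {a b : ℝ} (hab : a ≤ b)
    (hf : IntervalIntegrable f volume a b) (hg : IntervalIntegrable g volume a b)
    (hW : ∀ x, HasDerivAt W (W' x) x) (hW' : Continuous W') (hle : ∀ x, f x ≤ W' x + g x) :
    ∫ x in a..b, f x ≤ W b - W a + ∫ x in a..b, g x := by
  have hW'i : IntervalIntegrable W' volume a b := hW'.intervalIntegrable a b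
  calc ∫ x in a..b, f x ≤ ∫ x in a..b, (W' x + g x) :=
        intervalIntegral.integral_mono_on hab hf (hW'i.add hg) fun x _ => hle x
    _ = W b - W a + ∫ x in a..b, g x := by
        rw [intervalIntegral.integral_add hW'i hg,
          intervalIntegral.integral_eq_sub_of_hasDerivAt (fun x _ => hW x) hW'i]

theorem integrable_of_le_deriv_add {h : ℝ → ℝ} {a b : ℝ} (hf : Continuous f) (hh : Integrable h)
    (hg : Integrable g) (hhf : ∀ x, h x ≤ f x) (hW : ∀ x, HasDerivAt W (W' x) x)
    (hW' : Continuous W') (hle : ∀ x, f x ≤ W' x + g x)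
    (htop : Tendsto W atTop (𝓝 b)) (hbot : Tendsto W atBot (𝓝 a)) : Integrable f := by
  have hbound : Tendsto (fun R => W R - W (-R) + (∫ x in -R..R, g x) - ∫ x in -R..R, h x) atTop
      (𝓝 (b - a + (∫ x, g x) - ∫ x, h x)) :=
    ((htop.sub (hbot.comp tendsto_neg_atTop_atBot)).add
      (intervalIntegral_tendsto_integral hg tendsto_neg_atTop_atBot tendsto_id)).sub
      (intervalIntegral_tendsto_integral hh tendsto_neg_atTop_atBot tendsto_id)
  have hfh : Integrable (fun x => f x - h x) := by
    refine integrable_of_intervalIntegral_norm_bounded (b - a + (∫ x, g x) - (∫ x, h x) + 1)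
      (fun R => ((hf.integrableOn_Icc (a := -R) (b := R)).mono_set Ioc_subset_Icc_self).sub
        hh.integrableOn) tendsto_neg_atTop_atBot tendsto_id ?_
    filter_upwards [hbound.eventually (eventually_le_nhds (lt_add_one _)),
      eventually_ge_atTop 0] with R hR hR0
    have hRR : -R ≤ R := by linarith
    have hfi : IntervalIntegrable f volume (-R) R := hf.intervalIntegrable _ _
    have hhi : IntervalIntegrable h volume (-R) R := hh.intervalIntegrable
    calc ∫ x in -R..R, ‖f x - h x‖ = (∫ x in -R..R, f x) - ∫ x in -R..R, h x := by
          rw [← intervalIntegral.integral_sub hfi hhi]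
          refine intervalIntegral.integral_congr fun x _ => ?_
          simp only [Real.norm_eq_abs, abs_of_nonneg (sub_nonneg.mpr (hhf x))]
      _ ≤ W R - W (-R) + (∫ x in -R..R, g x) - ∫ x in -R..R, h x := by
          gcongr
          exact intervalIntegral_le_sub_add_of_le_deriv_add hRR hfi hg.intervalIntegrable hW hW' hle
      _ ≤ _ := hR
  exact (hfh.add hh).congr (Eventually.of_forall fun x => sub_add_cancel (f x) (h x))

theorem integral_le_of_le_deriv_add {a b : ℝ} (hf : Integrable f) (hg : Integrable g)
    (hW : ∀ x, HasDerivAt W (W' x) x) (hW' : Continuous W') (hle : ∀ x, f x ≤ W' x + g x)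
    (htop : Tendsto W atTop (𝓝 b)) (hbot : Tendsto W atBot (𝓝 a)) :
    ∫ x, f x ≤ b - a + ∫ x, g x :=
  le_of_tendsto_of_tendsto
    (intervalIntegral_tendsto_integral hf tendsto_neg_atTop_atBot tendsto_id)
    ((htop.sub (hbot.comp tendsto_neg_atTop_atBot)).add
      (intervalIntegral_tendsto_integral hg tendsto_neg_atTop_atBot tendsto_id))
    (by
      filter_upwards [eventually_ge_atTop 0] with R hR
      exact intervalIntegral_le_sub_add_of_le_deriv_add (by simp only [id]; linarith)
        hf.intervalIntegrable hg.intervalIntegrable hW hW' hle)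

end BoundaryTerm

theorem tendsto_zero_of_tendsto_id_mul {f : ℝ → ℝ} {l : Filter ℝ}
    (hl : Tendsto (fun x => |x|) l atTop) (h : Tendsto (fun x => x * f x) l (𝓝 0)) :
    Tendsto f l (𝓝 0) := by
  refine squeeze_zero_norm' ?_ (by simpa using h.norm)
  filter_upwards [hl.eventually_ge_atTop 1] with x hx
  rw [Real.norm_eq_abs]
  exact le_mul_of_one_le_left (abs_nonneg _) hx

theorem tendsto_zero_of_tendsto_sq {f : ℝ → ℝ} {l : Filter ℝ}
    (h : Tendsto (fun x => f x ^ 2) l (𝓝 0)) : Tendsto f l (𝓝 0) :=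
  squeeze_zero_norm (fun x => (sqrt_sq_eq_abs (f x)).ge)
    (by simpa [Function.comp_def] using (continuous_sqrt.tendsto 0).comp h)

noncomputable def fisherInfo (p : ℝ → ℝ) : ℝ := ∫ x, deriv p x ^ 2 / p x

theorem fisherInfo_nonneg {p : ℝ → ℝ} (hpos : ∀ x, 0 < p x) : 0 ≤ fisherInfo p :=
  integral_nonneg fun x => div_nonneg (sq_nonneg _) (hpos x).le

theorem intervalIntegral_fisher_le_fisherInfo {p : ℝ → ℝ} (hpos : ∀ x, 0 < p x)
    (hJ : Integrable fun x => deriv p x ^ 2 / p x) {a b : ℝ} (hab : a ≤ b) :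
    ∫ x in a..b, deriv p x ^ 2 / p x ≤ fisherInfo p := by
  rw [intervalIntegral.integral_of_le hab]
  exact setIntegral_le_integral hJ
    (Eventually.of_forall fun x => div_nonneg (sq_nonneg _) (hpos x).le)

section FisherInformation

variable {p : ℝ → ℝ} (hp : ContDiff ℝ 1 p) (hpos : ∀ x, 0 < p x)
include hp hpos

theorem sq_sub_le_intervalIntegral_mul_intervalIntegral {a b : ℝ} (hab : a ≤ b) :
    (p b - p a) ^ 2 ≤ (∫ x in a..b, deriv p x ^ 2 / p x) * ∫ x in a..b, p x := by
  have hpc : Continuous p := hp.continuous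
  have hp'c : Continuous (deriv p) := hp.continuous_deriv le_rfl
  have hJc : Continuous fun x => deriv p x ^ 2 / p x :=
    (hp'c.pow 2).div hpc fun x => (hpos x).ne'
  have hFTC : ∫ x in a..b, deriv p x = p b - p a :=
    intervalIntegral.integral_deriv_eq_sub (fun x _ => hp.differentiable one_ne_zero x)
      (hp'c.intervalIntegrable _ _)
  -- Integrating `(p' - t p)² / p ≥ 0` gives a nonnegative quadratic polynomial in `t`.
  have hquad : ∀ t : ℝ, 0 ≤ (∫ x in a..b, p x) * (t * t) + (-2 * (p b - p a)) * t +
      ∫ x in a..b, deriv p x ^ 2 / p x := by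
    intro t
    have hexpand : ∀ x, (deriv p x - t * p x) ^ 2 / p x =
        deriv p x ^ 2 / p x + (-2 * t) * deriv p x + (t * t) * p x := by
      intro x
      field_simp [(hpos x).ne']
      ring
    have hnonneg : 0 ≤ ∫ x in a..b, (deriv p x - t * p x) ^ 2 / p x :=
      intervalIntegral.integral_nonneg hab fun x _ => div_nonneg (sq_nonneg _) (hpos x).le
    simp only [hexpand] at hnonneg
    rw [intervalIntegral.integral_add (f := fun x => deriv p x ^ 2 / p x + -2 * t * deriv p x)
        (g := fun x => t * t * p x)
        ((hJc.add (continuous_const.mul hp'c)).intervalIntegrable _ _)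
        ((continuous_const.mul hpc).intervalIntegrable _ _),
      intervalIntegral.integral_add (f := fun x => deriv p x ^ 2 / p x)
        (g := fun x => -2 * t * deriv p x) (hJc.intervalIntegrable _ _)
        ((continuous_const.mul hp'c).intervalIntegrable _ _),
      intervalIntegral.integral_const_mul, intervalIntegral.integral_const_mul, hFTC] at hnonneg
    linarith
  have := discrim_le_zero hquad
  rw [discrim] at this
  linarith

variable (hpi : Integrable p) (hJ : Integrable fun x => deriv p x ^ 2 / p x)
include hpi hJ

theorem sq_le_fisherInfo_mul_integral_Ioi (htop : Tendsto p atTop (𝓝 0)) (x : ℝ) :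
    p x ^ 2 ≤ fisherInfo p * ∫ y in Ioi x, p y := by
  have hJ0 := fisherInfo_nonneg hpos
  have hbound : ∀ᶠ b in atTop, (p b - p x) ^ 2 ≤ fisherInfo p * ∫ y in Ioi x, p y := by
    filter_upwards [eventually_ge_atTop x] with b hb
    refine (sq_sub_le_intervalIntegral_mul_intervalIntegral hp hpos hb).trans ?_
    gcongr
    · exact intervalIntegral.integral_nonneg hb fun y _ => (hpos y).le
    · exact intervalIntegral_fisher_le_fisherInfo hpos hJ hb
    · rw [intervalIntegral.integral_of_le hb]
      exact setIntegral_mono_set hpi.integrableOn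
        (Eventually.of_forall fun y => (hpos y).le) Ioc_subset_Ioi_self.eventuallyLE
  have hlim : Tendsto (fun b => (p b - p x) ^ 2) atTop (𝓝 ((0 - p x) ^ 2)) :=
    (htop.sub_const _).pow 2
  simpa using le_of_tendsto hlim hbound

theorem sq_le_fisherInfo_mul_integral_Iic (hbot : Tendsto p atBot (𝓝 0)) (x : ℝ) :
    p x ^ 2 ≤ fisherInfo p * ∫ y in Iic x, p y := by
  have hJ0 := fisherInfo_nonneg hpos
  have hbound : ∀ᶠ a in atBot, (p x - p a) ^ 2 ≤ fisherInfo p * ∫ y in Iic x, p y := by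
    filter_upwards [eventually_le_atBot x] with a ha
    refine (sq_sub_le_intervalIntegral_mul_intervalIntegral hp hpos ha).trans ?_
    gcongr
    · exact intervalIntegral.integral_nonneg ha fun y _ => (hpos y).le
    · exact intervalIntegral_fisher_le_fisherInfo hpos hJ ha
    · rw [intervalIntegral.integral_of_le ha]
      exact setIntegral_mono_set hpi.integrableOn
        (Eventually.of_forall fun y => (hpos y).le) Ioc_subset_Iic_self.eventuallyLE
  have hlim : Tendsto (fun a => (p x - p a) ^ 2) atBot (𝓝 ((p x - 0) ^ 2)) :=
    (hbot.const_sub _).pow 2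
  simpa using le_of_tendsto hlim hbound

end FisherInformation

noncomputable def cumulative (q : ℝ → ℝ) (x : ℝ) : ℝ := ∫ t in Iic x, q t

section Cumulative

variable {q : ℝ → ℝ}

theorem cumulative_sub (hq : Integrable q) (a b : ℝ) :
    cumulative q b - cumulative q a = ∫ t in a..b, q t :=
  intervalIntegral.integral_Iic_sub_Iic hq.integrableOn hq.integrableOn

theorem hasDerivAt_cumulative (hq : Integrable q) (hqc : Continuous q) (x : ℝ) :
    HasDerivAt (cumulative q) (q x) x := by
  have hFTC := intervalIntegral.integral_hasDerivAt_right (a := 0) (b := x) hq.intervalIntegrable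
    (hqc.stronglyMeasurableAtFilter _ _) hqc.continuousAt
  refine (hFTC.const_add (cumulative q 0)).congr_of_eventuallyEq (Eventually.of_forall fun y => ?_)
  simp only [← cumulative_sub hq]
  ring

theorem cumulative_strictMono (hq : Integrable q) (hpos : ∀ x, 0 < q x) :
    StrictMono (cumulative q) := fun a b hab => by
  have := intervalIntegral.intervalIntegral_pos_of_pos hq.intervalIntegrable hpos hab
  linarith [cumulative_sub hq a b]

theorem tendsto_cumulative_atTop (hq : Integrable q) :
    Tendsto (cumulative q) atTop (𝓝 (∫ x, q x)) :=
  (aecover_Iic tendsto_id).integral_tendsto_of_countably_generated hq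

theorem tendsto_cumulative_atBot : Tendsto (cumulative q) atBot (𝓝 0) :=
  tendsto_integral_Iic_zero tendsto_id

theorem integral_Ioi_eq_integral_sub_cumulative (hq : Integrable q) (x : ℝ) :
    ∫ t in Ioi x, q t = (∫ t, q t) - cumulative q x := by
  rw [← intervalIntegral.integral_Iic_add_Ioi hq.integrableOn hq.integrableOn, cumulative]
  ring

theorem range_cumulative (hq : Integrable q) (hqc : Continuous q) (hpos : ∀ x, 0 < q x) :
    range (cumulative q) = Ioo 0 (∫ x, q x) := by
  have hmono := cumulative_strictMono hq hpos
  refine Subset.antisymm ?_ fun y hy => ?_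
  · rintro _ ⟨x, rfl⟩
    exact ⟨(hmono.monotone.le_of_tendsto tendsto_cumulative_atBot (x - 1)).trans_lt
        (hmono (sub_one_lt x)),
      (hmono (lt_add_one x)).trans_le
        (hmono.monotone.ge_of_tendsto (tendsto_cumulative_atTop hq) (x + 1))⟩
  · obtain ⟨a, ha⟩ := (tendsto_cumulative_atBot.eventually (eventually_lt_nhds hy.1)).exists
    obtain ⟨b, hb⟩ := ((tendsto_cumulative_atTop hq).eventually (eventually_gt_nhds hy.2)).exists
    exact intermediate_value_univ a b
      (continuous_iff_continuousAt.mpr fun x => (hasDerivAt_cumulative hq hqc x).continuousAt)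
      ⟨ha.le, hb.le⟩

end Cumulative

structure IsPositiveDensity (q : ℝ → ℝ) : Prop where
  continuous : Continuous q
  pos : ∀ x, 0 < q x
  integral_eq_one : ∫ x, q x = 1

namespace IsPositiveDensity

variable {q : ℝ → ℝ} (hq : IsPositiveDensity q)
include hq

theorem integrable : Integrable q :=
  Integrable.of_integral_ne_zero (by simp [hq.integral_eq_one])

theorem range_cumulative : range (cumulative q) = Ioo 0 1 := by
  rw [_root_.range_cumulative hq.integrable hq.continuous hq.pos, hq.integral_eq_one]

end IsPositiveDensity

theorem IsPositiveDensity.continuous_mul_log_div {p q : ℝ → ℝ} (hp : IsPositiveDensity p)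
    (hq : IsPositiveDensity q) : Continuous fun x => p x * log (p x / q x) :=
  hp.continuous.mul ((hp.continuous.div hq.continuous fun x => (hq.pos x).ne').log
    fun x => (div_pos (hp.pos x) (hq.pos x)).ne')

noncomputable def monotoneTransport (p q : ℝ → ℝ) (x : ℝ) : ℝ :=
  Function.invFun (cumulative q) (cumulative p x)

section MonotoneTransport

variable {p q : ℝ → ℝ} (hp : IsPositiveDensity p) (hq : IsPositiveDensity q)
include hp hq

theorem cumulative_monotoneTransport (x : ℝ) :
    cumulative q (monotoneTransport p q x) = cumulative p x :=
  Function.invFun_eq <| by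
    rw [← mem_range, hq.range_cumulative, ← hp.range_cumulative]
    exact mem_range_self x

theorem monotoneTransport_strictMono : StrictMono (monotoneTransport p q) := fun a b hab => by
  rw [← (cumulative_strictMono hq.integrable hq.pos).lt_iff_lt,
    cumulative_monotoneTransport hp hq, cumulative_monotoneTransport hp hq]
  exact cumulative_strictMono hp.integrable hp.pos hab

theorem monotoneTransport_surjective : Function.Surjective (monotoneTransport p q) := fun s => by
  obtain ⟨x, hx⟩ : cumulative q s ∈ range (cumulative p) := by
    rw [hp.range_cumulative, ← hq.range_cumulative]
    exact mem_range_self s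
  exact ⟨x, (cumulative_strictMono hq.integrable hq.pos).injective
    ((cumulative_monotoneTransport hp hq x).trans hx)⟩

theorem continuous_monotoneTransport : Continuous (monotoneTransport p q) :=
  (monotoneTransport_strictMono hp hq).monotone.continuous_of_surjective
    (monotoneTransport_surjective hp hq)

theorem hasDerivAt_monotoneTransport (x : ℝ) :
    HasDerivAt (monotoneTransport p q) (p x / q (monotoneTransport p q x)) x :=
  HasDerivAt.of_comp_left (continuous_monotoneTransport hp hq).continuousAt
    (hasDerivAt_cumulative hq.integrable hq.continuous _)
    (hasDerivAt_cumulative hp.integrable hp.continuous x) (hq.pos _).ne'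
    (Eventually.of_forall (cumulative_monotoneTransport hp hq))

theorem tendsto_monotoneTransport_atTop : Tendsto (monotoneTransport p q) atTop atTop :=
  tendsto_atTop_atTop_of_monotone (monotoneTransport_strictMono hp hq).monotone
    fun s => ((monotoneTransport_surjective hp hq) s).imp fun _ h => h.ge

theorem tendsto_monotoneTransport_atBot : Tendsto (monotoneTransport p q) atBot atBot :=
  tendsto_atBot_atBot_of_monotone (monotoneTransport_strictMono hp hq).monotone
    fun s => ((monotoneTransport_surjective hp hq) s).imp fun _ h => h.le

theorem integral_Ioi_monotoneTransport (x : ℝ) :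
    ∫ t in Ioi (monotoneTransport p q x), q t = ∫ t in Ioi x, p t := by
  rw [integral_Ioi_eq_integral_sub_cumulative hq.integrable,
    integral_Ioi_eq_integral_sub_cumulative hp.integrable, cumulative_monotoneTransport hp hq,
    hp.integral_eq_one, hq.integral_eq_one]

end MonotoneTransport

section SecondMoment

variable {q : ℝ → ℝ} (hq0 : ∀ x, 0 ≤ q x) (hq : Integrable q)
  (hq2 : Integrable fun x => x ^ 2 * q x)
include hq0 hq hq2

theorem tendsto_sq_mul_integral_Ioi :
    Tendsto (fun s => s ^ 2 * ∫ t in Ioi s, q t) atTop (𝓝 0) := by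
  refine squeeze_zero' (Eventually.of_forall fun s => mul_nonneg (sq_nonneg s)
      (setIntegral_nonneg measurableSet_Ioi fun t _ => hq0 t)) ?_
    (tendsto_integral_Ioi_zero (f := fun t => t ^ 2 * q t) (μ := volume) tendsto_id)
  filter_upwards [eventually_ge_atTop 0] with s hs
  rw [← integral_const_mul]
  exact setIntegral_mono_on (hq.integrableOn.const_mul _) hq2.integrableOn measurableSet_Ioi
    fun t ht => mul_le_mul_of_nonneg_right (pow_le_pow_left₀ hs (le_of_lt ht) 2) (hq0 t)

theorem tendsto_sq_mul_cumulative :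
    Tendsto (fun s => s ^ 2 * cumulative q s) atBot (𝓝 0) := by
  refine squeeze_zero' (Eventually.of_forall fun s => mul_nonneg (sq_nonneg s)
      (setIntegral_nonneg measurableSet_Iic fun t _ => hq0 t)) ?_
    (tendsto_integral_Iic_zero (f := fun t => t ^ 2 * q t) (μ := volume) tendsto_id)
  filter_upwards [eventually_le_atBot 0] with s hs
  rw [cumulative, ← integral_const_mul]
  refine setIntegral_mono_on (hq.integrableOn.const_mul _) hq2.integrableOn measurableSet_Iic
    fun t (ht : t ≤ s) => mul_le_mul_of_nonneg_right ?_ (hq0 t)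
  nlinarith

end SecondMoment

section TransportTail

variable {p q : ℝ → ℝ} (hp : IsPositiveDensity p) (hq : IsPositiveDensity q)
  (hpd : ContDiff ℝ 1 p) (hJ : Integrable fun x => deriv p x ^ 2 / p x)
  (hq2 : Integrable fun x => x ^ 2 * q x)
include hp hq hpd hJ hq2

theorem tendsto_mul_monotoneTransport_atTop (htop : Tendsto p atTop (𝓝 0)) :
    Tendsto (fun x => p x * monotoneTransport p q x) atTop (𝓝 0) := by
  refine tendsto_zero_of_tendsto_sq (squeeze_zero (fun x => sq_nonneg _) (fun x => ?_)
    (by simpa using ((tendsto_sq_mul_integral_Ioi (fun x => (hq.pos x).le) hq.integrable hq2).comp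
      (tendsto_monotoneTransport_atTop hp hq)).const_mul (fisherInfo p)))
  calc (p x * monotoneTransport p q x) ^ 2
      = p x ^ 2 * monotoneTransport p q x ^ 2 := mul_pow _ _ _
    _ ≤ fisherInfo p * (∫ t in Ioi x, p t) * monotoneTransport p q x ^ 2 :=
        mul_le_mul_of_nonneg_right
          (sq_le_fisherInfo_mul_integral_Ioi hpd hp.pos hp.integrable hJ htop x) (sq_nonneg _)
    _ = fisherInfo p * (monotoneTransport p q x ^ 2 *
          ∫ t in Ioi (monotoneTransport p q x), q t) := by
        rw [integral_Ioi_monotoneTransport hp hq]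
        ring

theorem tendsto_mul_monotoneTransport_atBot (hbot : Tendsto p atBot (𝓝 0)) :
    Tendsto (fun x => p x * monotoneTransport p q x) atBot (𝓝 0) := by
  refine tendsto_zero_of_tendsto_sq (squeeze_zero (fun x => sq_nonneg _) (fun x => ?_)
    (by simpa using ((tendsto_sq_mul_cumulative (fun x => (hq.pos x).le) hq.integrable hq2).comp
      (tendsto_monotoneTransport_atBot hp hq)).const_mul (fisherInfo p)))
  calc (p x * monotoneTransport p q x) ^ 2
      = p x ^ 2 * monotoneTransport p q x ^ 2 := mul_pow _ _ _
    _ ≤ fisherInfo p * cumulative p x * monotoneTransport p q x ^ 2 :=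
        mul_le_mul_of_nonneg_right
          (sq_le_fisherInfo_mul_integral_Iic hpd hp.pos hp.integrable hJ hbot x) (sq_nonneg _)
    _ = fisherInfo p * (monotoneTransport p q x ^ 2 *
          cumulative q (monotoneTransport p q x)) := by
        rw [cumulative_monotoneTransport hp hq]
        ring

end TransportTail

local notation "φ" => gaussianPDFReal 0 1

theorem gaussianPDFReal_zero_one (x : ℝ) : φ x = exp (-x ^ 2 / 2) / √(2 * π) := by
  simp [gaussianPDFReal, div_eq_inv_mul]

theorem isPositiveDensity_gaussianPDFReal : IsPositiveDensity φ where
  continuous := by unfold gaussianPDFReal; fun_prop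
  pos x := gaussianPDFReal_pos 0 1 x one_ne_zero
  integral_eq_one := integral_gaussianPDFReal_eq_one 0 one_ne_zero

theorem integrable_sq_mul_gaussianPDFReal : Integrable fun x => x ^ 2 * φ x := by
  refine ((integrable_rpow_mul_exp_neg_mul_sq (b := 1 / 2) (by norm_num) (s := 2)
    (by norm_num)).div_const √(2 * π)).congr (Eventually.of_forall fun x => ?_)
  simp only [gaussianPDFReal_zero_one, rpow_two]
  ring_nf

theorem log_gaussianPDFReal_zero_one (x : ℝ) : log (φ x) = -x ^ 2 / 2 - log √(2 * π) := by
  rw [gaussianPDFReal_zero_one, log_div (exp_ne_zero _) (by positivity), log_exp]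

theorem sub_le_mul_log_div {a b : ℝ} (ha : 0 < a) (hb : 0 < b) : a - b ≤ a * log (a / b) := by
  have := one_sub_inv_le_log_of_pos (div_pos ha hb)
  rw [inv_div] at this
  calc a - b = a * (1 - b / a) := by field_simp
    _ ≤ a * log (a / b) := mul_le_mul_of_nonneg_left this ha.le

-- At `P = p x`, `P' = p' x`, `s = T x` the right side is `(p T)' + (p'² / p + x² p) / 2 - p`,
-- as `T' = p / φ(T)`.
theorem mul_log_div_gaussianPDFReal_le {P : ℝ} (hP : 0 < P) (P' x s : ℝ) :
    P * log (P / φ x) ≤ P' * s + P * (P / φ s) + ((P' ^ 2 / P + x ^ 2 * P) / 2 - P) := by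
  have hφ := isPositiveDensity_gaussianPDFReal.pos
  have hlog : log (P / φ x) = log (P / φ s) + (x ^ 2 - s ^ 2) / 2 := by
    rw [log_div hP.ne' (hφ x).ne', log_div hP.ne' (hφ s).ne', log_gaussianPDFReal_zero_one,
      log_gaussianPDFReal_zero_one]
    ring
  have hlog_le := mul_le_mul_of_nonneg_left (log_le_sub_one_of_pos (div_pos hP (hφ s))) hP.le
  have hsquare : P' * s + P' ^ 2 / P / 2 + P * s ^ 2 / 2 = (P * s + P') ^ 2 / P / 2 := by
    field_simp
    ring
  have hsquare_nonneg : 0 ≤ (P * s + P') ^ 2 / P / 2 := by positivity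
  rw [hlog]
  nlinarith

theorem relative_entropy_le_half_relative_fisher_general
    (p : ℝ → ℝ) (hp : ContDiff ℝ 1 p) (hpos : ∀ x, 0 < p x)
    (hp1 : ∫ x, p x = 1) (hvar : ∫ x, x ^ 2 * p x = 1)
    (htail_top : Tendsto (fun x => x * p x) atTop (nhds 0))
    (htail_bot : Tendsto (fun x => x * p x) atBot (nhds 0))
    (hJ : Integrable (fun x => (deriv p x) ^ 2 / p x)) :
    ∫ x, p x * Real.log (p x / (Real.exp (-x ^ 2 / 2) / Real.sqrt (2 * π)))
      ≤ (1 / 2) * ((∫ x, (deriv p x) ^ 2 / p x) - 1) := by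
  simp only [← gaussianPDFReal_zero_one]
  have hdens : IsPositiveDensity p := ⟨hp.continuous, hpos, hp1⟩
  have hφ := isPositiveDensity_gaussianPDFReal
  set T := monotoneTransport p φ
  have hx2 : Integrable fun x => x ^ 2 * p x := .of_integral_ne_zero (by simp [hvar])
  have hsum : Integrable fun x => (deriv p x ^ 2 / p x + x ^ 2 * p x) / 2 :=
    (hJ.add hx2).div_const 2
  have hg : Integrable fun x => (deriv p x ^ 2 / p x + x ^ 2 * p x) / 2 - p x :=
    hsum.sub hdens.integrable
  have hW x : HasDerivAt (fun y => p y * T y) (deriv p x * T x + p x * (p x / φ (T x))) x :=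
    (hp.differentiable one_ne_zero x).hasDerivAt.mul (hasDerivAt_monotoneTransport hdens hφ x)
  have hW' : Continuous fun x => deriv p x * T x + p x * (p x / φ (T x)) := by
    have := hp.continuous_deriv le_rfl
    have := continuous_monotoneTransport hdens hφ
    have := hφ.continuous
    fun_prop (disch := exact fun x => (hφ.pos _).ne')
  have hle x := mul_log_div_gaussianPDFReal_le (hpos x) (deriv p x) x (T x)
  have htop := tendsto_mul_monotoneTransport_atTop hdens hφ hp hJ integrable_sq_mul_gaussianPDFReal
    (tendsto_zero_of_tendsto_id_mul tendsto_abs_atTop_atTop htail_top)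
  have hbot := tendsto_mul_monotoneTransport_atBot hdens hφ hp hJ integrable_sq_mul_gaussianPDFReal
    (tendsto_zero_of_tendsto_id_mul tendsto_abs_atBot_atTop htail_bot)
  have hf : Integrable fun x => p x * log (p x / φ x) :=
    integrable_of_le_deriv_add (hdens.continuous_mul_log_div hφ)
      (hdens.integrable.sub hφ.integrable) hg (fun x => sub_le_mul_log_div (hpos x) (hφ.pos x))
      hW hW' hle htop hbot
  calc ∫ x, p x * log (p x / φ x)
      ≤ 0 - 0 + ∫ x, ((deriv p x ^ 2 / p x + x ^ 2 * p x) / 2 - p x) :=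
        integral_le_of_le_deriv_add hf hg hW hW' hle htop hbot
    _ = _ := by
        rw [integral_sub hsum hdens.integrable, integral_div, integral_add hJ hx2, hvar, hp1]
        ring

/-- Log-Sobolev-type bound: for a centered, unit-variance, continuously differentiable and
strictly positive probability density `p` with vanishing tails and finite Fisher
information `J`, the relative entropy with respect to the standard Gaussian satisfies
`D(p‖φ) ≤ (J - 1)/2`. -/
theorem relative_entropy_le_half_relative_fisher
    (p : ℝ → ℝ) (hp : ContDiff ℝ 1 p) (hpos : ∀ x, 0 < p x)
    (hp1 : ∫ x, p x = 1) (hmean : ∫ x, x * p x = 0) (hvar : ∫ x, x ^ 2 * p x = 1)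
    (htail_top : Tendsto (fun x => x * p x) atTop (nhds 0))
    (htail_bot : Tendsto (fun x => x * p x) atBot (nhds 0))
    (hJ : Integrable (fun x => (deriv p x) ^ 2 / p x)) :
    ∫ x, p x * Real.log (p x / (Real.exp (-x ^ 2 / 2) / Real.sqrt (2 * π)))
      ≤ (1 / 2) * ((∫ x, (deriv p x) ^ 2 / p x) - 1) :=
  relative_entropy_le_half_relative_fisher_general p hp hpos hp1 hvar htail_top htail_bot hJ
end

section
/- Let H ∈ (1/2, 3/4). Then liminf_{M→∞} (1/M) ∑_{k=2}^{M} ∑_{ℓ=0}^{M−k} ((ℓ+1)^{2H−2} − (ℓ+k−1)^{2H−2}) · ((ℓ+2)^{2H−2} − (M+1−k)^{2H−2}) > 0. -/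
open Filter

open Filter Finset Set

namespace LiminfBlockAux

lemma sum_rpow_le (a : ℝ) (ha1 : -1 < a) (ha0 : a < 0) (M : ℕ) :
    ∑ ℓ ∈ range M, ((ℓ : ℝ) + 1) ^ a ≤ 1 + (M : ℝ) ^ (a + 1) / (a + 1) := by
  have hap : 0 < a + 1 := by linarith
  rcases Nat.eq_zero_or_pos M with h | h
  · subst h
    simp [Real.zero_rpow hap.ne']
  obtain ⟨n, rfl⟩ : ∃ n, M = n + 1 := ⟨M - 1, (Nat.succ_pred_eq_of_pos h).symm⟩
  rw [Finset.sum_range_succ']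
  have hanti : AntitoneOn (fun x : ℝ => x ^ a) (Icc (1 : ℝ) (1 + n)) := by
    intro x hx y hy hxy
    exact Real.rpow_le_rpow_of_nonpos (lt_of_lt_of_le one_pos hx.1) hxy ha0.le
  have hint := hanti.sum_le_integral
  rw [integral_rpow (Or.inl ha1)] at hint
  have hle : ∑ i ∈ range n, (((i + 1 : ℕ) : ℝ) + 1) ^ a
      ≤ ((1 + (n : ℝ)) ^ (a + 1) - (1 : ℝ) ^ (a + 1)) / (a + 1) := by
    refine le_trans (le_of_eq ?_) hint
    apply Finset.sum_congr rfl
    intro i _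
    push_cast
    ring_nf
  have h1 : ((1 : ℝ) + n) = ((n + 1 : ℕ) : ℝ) := by push_cast; ring
  rw [h1] at hle
  have h0 : (((0 : ℕ) : ℝ) + 1) ^ a = 1 := by norm_num
  rw [h0]
  have h2 : (((n + 1 : ℕ) : ℝ) ^ (a + 1) - (1:ℝ) ^ (a + 1)) / (a + 1)
      ≤ ((n + 1 : ℕ) : ℝ) ^ (a + 1) / (a + 1) := by
    apply div_le_div_of_nonneg_right ?_ hap.le
    rw [Real.one_rpow]
    nlinarith [Real.rpow_nonneg (by positivity : (0:ℝ) ≤ ((n+1:ℕ):ℝ)) (a+1)]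
  linarith

lemma sum_sq_rpow_le (a : ℝ) (ha : a < -(1/2)) (M : ℕ) :
    ∑ ℓ ∈ range M, ((ℓ : ℝ) + 1) ^ a * ((ℓ : ℝ) + 1) ^ a ≤ 1 - 1 / (2 * a + 1) := by
  have hc : 2 * a + 1 < 0 := by linarith
  have hrhs : (0:ℝ) ≤ 1 - 1 / (2 * a + 1) := by
    have : 1 / (2 * a + 1) ≤ 0 := div_nonpos_of_nonneg_of_nonpos zero_le_one hc.le
    linarith
  rcases Nat.eq_zero_or_pos M with h | h
  · subst h; simpa using hrhs
  obtain ⟨n, rfl⟩ : ∃ n, M = n + 1 := ⟨M - 1, (Nat.succ_pred_eq_of_pos h).symm⟩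
  rw [Finset.sum_range_succ']
  have hanti : AntitoneOn (fun x : ℝ => x ^ (2 * a)) (Icc (1 : ℝ) (1 + n)) := by
    intro x hx y hy hxy
    exact Real.rpow_le_rpow_of_nonpos (lt_of_lt_of_le one_pos hx.1) hxy (by linarith)
  have hint := hanti.sum_le_integral
  have hzero : (0 : ℝ) ∉ Set.uIcc (1:ℝ) (1 + (n:ℝ)) := by
    rw [Set.uIcc_of_le (by nlinarith [Nat.cast_nonneg (α := ℝ) n] : (1:ℝ) ≤ 1 + (n:ℝ))]
    intro hmem
    have := hmem.1
    linarith
  rw [integral_rpow (Or.inr ⟨by intro he; linarith, hzero⟩)] at hint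
  have hle : ∑ i ∈ range n, (((i + 1 : ℕ) : ℝ) + 1) ^ a * (((i + 1 : ℕ) : ℝ) + 1) ^ a
      ≤ ((1 + (n : ℝ)) ^ (2 * a + 1) - (1 : ℝ) ^ (2 * a + 1)) / (2 * a + 1) := by
    refine le_trans (le_of_eq ?_) hint
    apply Finset.sum_congr rfl
    intro i _
    have hx : (0:ℝ) < ((i + 1 : ℕ) : ℝ) + 1 := by positivity
    rw [← Real.rpow_add hx]
    have : a + a = 2 * a := by ring
    rw [this]
    push_cast
    ring_nf
  have h0 : (((0 : ℕ) : ℝ) + 1) ^ a * (((0 : ℕ) : ℝ) + 1) ^ a = 1 := by norm_num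
  rw [h0]
  have hX : (0:ℝ) ≤ (1 + (n : ℝ)) ^ (2 * a + 1) := Real.rpow_nonneg (by positivity) _
  have key : ((1 + (n : ℝ)) ^ (2 * a + 1) - (1 : ℝ) ^ (2 * a + 1)) / (2 * a + 1)
      ≤ - (1 / (2 * a + 1)) := by
    rw [Real.one_rpow]
    have hsum : ((1 + (n : ℝ)) ^ (2 * a + 1) - 1) / (2 * a + 1) + 1 / (2 * a + 1)
        = (1 + (n : ℝ)) ^ (2 * a + 1) / (2 * a + 1) := by ring
    have hnp : (1 + (n : ℝ)) ^ (2 * a + 1) / (2 * a + 1) ≤ 0 :=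
      div_nonpos_of_nonneg_of_nonpos hX hc.le
    linarith
  linarith

lemma sum_Icc_rev (a : ℝ) (M : ℕ) :
    ∑ k ∈ Finset.Icc 2 M, ((M : ℝ) + 1 - (k : ℝ)) ^ a
      = ∑ j ∈ range (M - 1), ((j : ℝ) + 1) ^ a := by
  apply Finset.sum_nbij' (fun k => M - k) (fun j => M - j)
  · intro k hk
    simp only [Finset.mem_Icc] at hk
    simp only [Finset.mem_range]
    omega
  · intro j hj
    simp only [Finset.mem_range] at hj
    simp only [Finset.mem_Icc]
    omega
  · intro k hk
    simp only [Finset.mem_Icc] at hk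
    omega
  · intro j hj
    simp only [Finset.mem_range] at hj
    omega
  · intro k hk
    simp only [Finset.mem_Icc] at hk
    congr 1
    have : ((M - k : ℕ) : ℝ) = (M : ℝ) - (k : ℝ) := by
      rw [Nat.cast_sub hk.2]
    rw [this]; ring

lemma sum_Icc_shift (a : ℝ) (M : ℕ) :
    ∑ k ∈ Finset.Icc 2 M, ((k : ℝ) - 1) ^ a
      = ∑ j ∈ range (M - 1), ((j : ℝ) + 1) ^ a := by
  apply Finset.sum_nbij' (fun k => k - 2) (fun j => j + 2)
  · intro k hk; simp only [Finset.mem_Icc] at hk; simp only [Finset.mem_range]; omega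
  · intro j hj; simp only [Finset.mem_range] at hj; simp only [Finset.mem_Icc]; omega
  · intro k hk; simp only [Finset.mem_Icc] at hk; omega
  · intro j hj; simp only [Finset.mem_range] at hj; omega
  · intro k hk
    simp only [Finset.mem_Icc] at hk
    congr 1
    have : ((k - 2 : ℕ) : ℝ) = (k : ℝ) - 2 := by rw [Nat.cast_sub hk.1]; norm_num
    rw [this]; ring

/-- Lower bound for the double sum. -/
lemma key_lower (a : ℝ) (ha0 : a < 0) (M : ℕ) (hM : 1 ≤ M) :
    ((M : ℝ) - 1) * (2:ℝ) ^ a - 2 * (∑ ℓ ∈ range M, ((ℓ : ℝ) + 1) ^ a) ^ 2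
      ≤ ∑ k ∈ Finset.Icc 2 M, ∑ ℓ ∈ Finset.range (M - k + 1),
          (((ℓ : ℝ) + 1) ^ a - ((ℓ : ℝ) + (k : ℝ) - 1) ^ a) *
            (((ℓ : ℝ) + 2) ^ a - ((M : ℝ) + 1 - (k : ℝ)) ^ a) := by
  set S := ∑ ℓ ∈ range M, ((ℓ : ℝ) + 1) ^ a with hSdef
  have hS0 : 0 ≤ S := Finset.sum_nonneg fun i _ => Real.rpow_nonneg (by positivity) a
  have hSD : ∑ j ∈ range (M - 1), ((j : ℝ) + 1) ^ a ≤ S := by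
    apply Finset.sum_le_sum_of_subset_of_nonneg
    · exact Finset.range_subset_range.mpr (by omega)
    · intro i _ _; exact Real.rpow_nonneg (by positivity) a
  -- pointwise lower bound
  have h1 : ∑ k ∈ Finset.Icc 2 M, ∑ ℓ ∈ Finset.range (M - k + 1),
        (((ℓ : ℝ) + 1) ^ a * ((ℓ : ℝ) + 2) ^ a
          - ((ℓ : ℝ) + 1) ^ a * ((M : ℝ) + 1 - (k : ℝ)) ^ a
          - ((ℓ : ℝ) + (k : ℝ) - 1) ^ a * ((ℓ : ℝ) + 2) ^ a)
      ≤ ∑ k ∈ Finset.Icc 2 M, ∑ ℓ ∈ Finset.range (M - k + 1),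
          (((ℓ : ℝ) + 1) ^ a - ((ℓ : ℝ) + (k : ℝ) - 1) ^ a) *
            (((ℓ : ℝ) + 2) ^ a - ((M : ℝ) + 1 - (k : ℝ)) ^ a) := by
    apply Finset.sum_le_sum
    intro k hk
    simp only [Finset.mem_Icc] at hk
    apply Finset.sum_le_sum
    intro ℓ _
    have hk2 : (2:ℝ) ≤ (k:ℝ) := by exact_mod_cast hk.1
    have hkM : (k:ℝ) ≤ (M:ℝ) := by exact_mod_cast hk.2
    have hl0 : (0:ℝ) ≤ (ℓ:ℝ) := Nat.cast_nonneg ℓ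
    have hB : 0 ≤ ((ℓ : ℝ) + (k : ℝ) - 1) ^ a := Real.rpow_nonneg (by linarith) a
    have hD : 0 ≤ ((M : ℝ) + 1 - (k : ℝ)) ^ a := Real.rpow_nonneg (by linarith) a
    nlinarith [mul_nonneg hB hD]
  -- AC bound
  have hAC : ((M : ℝ) - 1) * (2:ℝ) ^ a
      ≤ ∑ k ∈ Finset.Icc 2 M, ∑ ℓ ∈ Finset.range (M - k + 1),
          ((ℓ : ℝ) + 1) ^ a * ((ℓ : ℝ) + 2) ^ a := by
    have hinner : ∀ k ∈ Finset.Icc 2 M,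
        (2:ℝ) ^ a ≤ ∑ ℓ ∈ Finset.range (M - k + 1), ((ℓ : ℝ) + 1) ^ a * ((ℓ : ℝ) + 2) ^ a := by
      intro k hk
      have h0mem : (0:ℕ) ∈ Finset.range (M - k + 1) := by simp
      have := Finset.single_le_sum
        (f := fun ℓ : ℕ => ((ℓ : ℝ) + 1) ^ a * ((ℓ : ℝ) + 2) ^ a)
        (fun i _ => by positivity) h0mem
      simpa [Real.one_rpow] using this
    calc ((M : ℝ) - 1) * (2:ℝ) ^ a
        = ∑ _k ∈ Finset.Icc 2 M, (2:ℝ) ^ a := by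
          rw [Finset.sum_const, Nat.card_Icc]
          have : ((M + 1 - 2 : ℕ) : ℝ) = (M : ℝ) - 1 := by
            rw [Nat.cast_sub (by omega : 2 ≤ M + 1)]
            push_cast
            ring
          rw [nsmul_eq_mul, this]
      _ ≤ _ := Finset.sum_le_sum hinner
  -- AD bound
  have hAD : ∑ k ∈ Finset.Icc 2 M, ∑ ℓ ∈ Finset.range (M - k + 1),
        ((ℓ : ℝ) + 1) ^ a * ((M : ℝ) + 1 - (k : ℝ)) ^ a ≤ S * S := by
    have step : ∀ k ∈ Finset.Icc 2 M,
        ∑ ℓ ∈ Finset.range (M - k + 1), ((ℓ : ℝ) + 1) ^ a * ((M : ℝ) + 1 - (k : ℝ)) ^ a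
          ≤ S * ((M : ℝ) + 1 - (k : ℝ)) ^ a := by
      intro k hk
      simp only [Finset.mem_Icc] at hk
      rw [← Finset.sum_mul]
      apply mul_le_mul_of_nonneg_right _ (Real.rpow_nonneg (by
        have : (k:ℝ) ≤ (M:ℝ) := by exact_mod_cast hk.2
        linarith) a)
      apply Finset.sum_le_sum_of_subset_of_nonneg
      · exact Finset.range_subset_range.mpr (by omega)
      · intro i _ _; exact Real.rpow_nonneg (by positivity) a
    calc ∑ k ∈ Finset.Icc 2 M, ∑ ℓ ∈ Finset.range (M - k + 1),
          ((ℓ : ℝ) + 1) ^ a * ((M : ℝ) + 1 - (k : ℝ)) ^ a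
        ≤ ∑ k ∈ Finset.Icc 2 M, S * ((M : ℝ) + 1 - (k : ℝ)) ^ a := Finset.sum_le_sum step
      _ = S * ∑ k ∈ Finset.Icc 2 M, ((M : ℝ) + 1 - (k : ℝ)) ^ a := by rw [Finset.mul_sum]
      _ = S * ∑ j ∈ range (M - 1), ((j : ℝ) + 1) ^ a := by rw [sum_Icc_rev]
      _ ≤ S * S := mul_le_mul_of_nonneg_left hSD hS0
  -- BC bound
  have hBC : ∑ k ∈ Finset.Icc 2 M, ∑ ℓ ∈ Finset.range (M - k + 1),
        ((ℓ : ℝ) + (k : ℝ) - 1) ^ a * ((ℓ : ℝ) + 2) ^ a ≤ S * S := by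
    have step : ∀ k ∈ Finset.Icc 2 M,
        ∑ ℓ ∈ Finset.range (M - k + 1), ((ℓ : ℝ) + (k : ℝ) - 1) ^ a * ((ℓ : ℝ) + 2) ^ a
          ≤ ((k : ℝ) - 1) ^ a * S := by
      intro k hk
      simp only [Finset.mem_Icc] at hk
      have hk2 : (2:ℝ) ≤ (k:ℝ) := by exact_mod_cast hk.1
      have pt : ∀ ℓ ∈ Finset.range (M - k + 1),
          ((ℓ : ℝ) + (k : ℝ) - 1) ^ a * ((ℓ : ℝ) + 2) ^ a
            ≤ ((k : ℝ) - 1) ^ a * ((ℓ : ℝ) + 1) ^ a := by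
        intro ℓ _
        have hl0 : (0:ℝ) ≤ (ℓ:ℝ) := Nat.cast_nonneg ℓ
        have hb : ((ℓ : ℝ) + (k : ℝ) - 1) ^ a ≤ ((k : ℝ) - 1) ^ a :=
          Real.rpow_le_rpow_of_nonpos (by linarith) (by linarith) ha0.le
        have hcc : ((ℓ : ℝ) + 2) ^ a ≤ ((ℓ : ℝ) + 1) ^ a :=
          Real.rpow_le_rpow_of_nonpos (by linarith) (by linarith) ha0.le
        exact mul_le_mul hb hcc (Real.rpow_nonneg (by linarith) a)
          (Real.rpow_nonneg (by linarith) a)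
      calc ∑ ℓ ∈ Finset.range (M - k + 1), ((ℓ : ℝ) + (k : ℝ) - 1) ^ a * ((ℓ : ℝ) + 2) ^ a
          ≤ ∑ ℓ ∈ Finset.range (M - k + 1), ((k : ℝ) - 1) ^ a * ((ℓ : ℝ) + 1) ^ a :=
            Finset.sum_le_sum pt
        _ = ((k : ℝ) - 1) ^ a * ∑ ℓ ∈ Finset.range (M - k + 1), ((ℓ : ℝ) + 1) ^ a := by
            rw [Finset.mul_sum]
        _ ≤ ((k : ℝ) - 1) ^ a * S := by
            apply mul_le_mul_of_nonneg_left _ (Real.rpow_nonneg (by linarith) a)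
            apply Finset.sum_le_sum_of_subset_of_nonneg
            · exact Finset.range_subset_range.mpr (by omega)
            · intro i _ _; exact Real.rpow_nonneg (by positivity) a
    calc ∑ k ∈ Finset.Icc 2 M, ∑ ℓ ∈ Finset.range (M - k + 1),
          ((ℓ : ℝ) + (k : ℝ) - 1) ^ a * ((ℓ : ℝ) + 2) ^ a
        ≤ ∑ k ∈ Finset.Icc 2 M, ((k : ℝ) - 1) ^ a * S := Finset.sum_le_sum step
      _ = (∑ k ∈ Finset.Icc 2 M, ((k : ℝ) - 1) ^ a) * S := by rw [Finset.sum_mul]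
      _ = (∑ j ∈ range (M - 1), ((j : ℝ) + 1) ^ a) * S := by rw [sum_Icc_shift]
      _ ≤ S * S := mul_le_mul_of_nonneg_right hSD hS0
  have hsplit : ∑ k ∈ Finset.Icc 2 M, ∑ ℓ ∈ Finset.range (M - k + 1),
        (((ℓ : ℝ) + 1) ^ a * ((ℓ : ℝ) + 2) ^ a
          - ((ℓ : ℝ) + 1) ^ a * ((M : ℝ) + 1 - (k : ℝ)) ^ a
          - ((ℓ : ℝ) + (k : ℝ) - 1) ^ a * ((ℓ : ℝ) + 2) ^ a)
      = (∑ k ∈ Finset.Icc 2 M, ∑ ℓ ∈ Finset.range (M - k + 1),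
          ((ℓ : ℝ) + 1) ^ a * ((ℓ : ℝ) + 2) ^ a)
        - (∑ k ∈ Finset.Icc 2 M, ∑ ℓ ∈ Finset.range (M - k + 1),
          ((ℓ : ℝ) + 1) ^ a * ((M : ℝ) + 1 - (k : ℝ)) ^ a)
        - (∑ k ∈ Finset.Icc 2 M, ∑ ℓ ∈ Finset.range (M - k + 1),
          ((ℓ : ℝ) + (k : ℝ) - 1) ^ a * ((ℓ : ℝ) + 2) ^ a) := by
    simp [Finset.sum_sub_distrib]
  nlinarith [h1, hAC, hAD, hBC, hsplit.symm.le, hsplit.le, sq_nonneg S]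

/-- Upper bound for the double sum. -/
lemma key_upper (a : ℝ) (ha0 : a < 0) (ha : a < -(1/2)) (M : ℕ) :
    ∑ k ∈ Finset.Icc 2 M, ∑ ℓ ∈ Finset.range (M - k + 1),
        (((ℓ : ℝ) + 1) ^ a - ((ℓ : ℝ) + (k : ℝ) - 1) ^ a) *
          (((ℓ : ℝ) + 2) ^ a - ((M : ℝ) + 1 - (k : ℝ)) ^ a)
      ≤ (M : ℝ) * (1 - 1 / (2 * a + 1)) := by
  have hC0 : (0:ℝ) ≤ 1 - 1 / (2 * a + 1) := by
    have hc : 2 * a + 1 < 0 := by linarith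
    have : 1 / (2 * a + 1) ≤ 0 := div_nonpos_of_nonneg_of_nonpos zero_le_one hc.le
    linarith
  have step : ∀ k ∈ Finset.Icc 2 M,
      ∑ ℓ ∈ Finset.range (M - k + 1),
        (((ℓ : ℝ) + 1) ^ a - ((ℓ : ℝ) + (k : ℝ) - 1) ^ a) *
          (((ℓ : ℝ) + 2) ^ a - ((M : ℝ) + 1 - (k : ℝ)) ^ a)
        ≤ 1 - 1 / (2 * a + 1) := by
    intro k hk
    simp only [Finset.mem_Icc] at hk
    have hk2 : (2:ℝ) ≤ (k:ℝ) := by exact_mod_cast hk.1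
    have hkM : (k:ℝ) ≤ (M:ℝ) := by exact_mod_cast hk.2
    have pt : ∀ ℓ ∈ Finset.range (M - k + 1),
        (((ℓ : ℝ) + 1) ^ a - ((ℓ : ℝ) + (k : ℝ) - 1) ^ a) *
          (((ℓ : ℝ) + 2) ^ a - ((M : ℝ) + 1 - (k : ℝ)) ^ a)
          ≤ ((ℓ : ℝ) + 1) ^ a * ((ℓ : ℝ) + 1) ^ a := by
      intro ℓ _
      have hl0 : (0:ℝ) ≤ (ℓ:ℝ) := Nat.cast_nonneg ℓ
      have hA : 0 ≤ ((ℓ : ℝ) + 1) ^ a := Real.rpow_nonneg (by linarith) a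
      have hB : 0 ≤ ((ℓ : ℝ) + (k : ℝ) - 1) ^ a := Real.rpow_nonneg (by linarith) a
      have hC : 0 ≤ ((ℓ : ℝ) + 2) ^ a := Real.rpow_nonneg (by linarith) a
      have hD : 0 ≤ ((M : ℝ) + 1 - (k : ℝ)) ^ a := Real.rpow_nonneg (by linarith) a
      have hBA : ((ℓ : ℝ) + (k : ℝ) - 1) ^ a ≤ ((ℓ : ℝ) + 1) ^ a :=
        Real.rpow_le_rpow_of_nonpos (by linarith) (by linarith) ha0.le
      have hCA : ((ℓ : ℝ) + 2) ^ a ≤ ((ℓ : ℝ) + 1) ^ a :=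
        Real.rpow_le_rpow_of_nonpos (by linarith) (by linarith) ha0.le
      nlinarith [mul_nonneg hB hC, mul_le_mul_of_nonneg_right hBA hD,
        mul_le_mul_of_nonneg_left hCA hA]
    calc ∑ ℓ ∈ Finset.range (M - k + 1),
          (((ℓ : ℝ) + 1) ^ a - ((ℓ : ℝ) + (k : ℝ) - 1) ^ a) *
            (((ℓ : ℝ) + 2) ^ a - ((M : ℝ) + 1 - (k : ℝ)) ^ a)
        ≤ ∑ ℓ ∈ Finset.range (M - k + 1), ((ℓ : ℝ) + 1) ^ a * ((ℓ : ℝ) + 1) ^ a :=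
          Finset.sum_le_sum pt
      _ ≤ 1 - 1 / (2 * a + 1) := sum_sq_rpow_le a ha _
  calc ∑ k ∈ Finset.Icc 2 M, ∑ ℓ ∈ Finset.range (M - k + 1),
        (((ℓ : ℝ) + 1) ^ a - ((ℓ : ℝ) + (k : ℝ) - 1) ^ a) *
          (((ℓ : ℝ) + 2) ^ a - ((M : ℝ) + 1 - (k : ℝ)) ^ a)
      ≤ ∑ _k ∈ Finset.Icc 2 M, (1 - 1 / (2 * a + 1)) := Finset.sum_le_sum step
    _ = ((M + 1 - 2 : ℕ) : ℝ) * (1 - 1 / (2 * a + 1)) := by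
        rw [Finset.sum_const, Nat.card_Icc, nsmul_eq_mul]
    _ ≤ (M : ℝ) * (1 - 1 / (2 * a + 1)) := by
        apply mul_le_mul_of_nonneg_right _ hC0
        have : M + 1 - 2 ≤ M := by omega
        exact_mod_cast this

end LiminfBlockAux
/-- Positivity of the liminf (Step 1, case `1/2 < H < 3/4`):
`liminf_{M→∞} (1/M) ∑_{k=2}^{M} ∑_{ℓ=0}^{M-k}
  ((ℓ+1)^{2H-2} - (ℓ+k-1)^{2H-2})((ℓ+2)^{2H-2} - (M+1-k)^{2H-2}) > 0`. -/
theorem liminf_block_sum_pos (H : ℝ) (h12 : 1 / 2 < H) (h34 : H < 3 / 4) :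
    0 < Filter.liminf (fun M : ℕ =>
        (1 / (M : ℝ)) * ∑ k ∈ Finset.Icc 2 M, ∑ ℓ ∈ Finset.range (M - k + 1),
          (((ℓ : ℝ) + 1) ^ (2 * H - 2) - ((ℓ : ℝ) + (k : ℝ) - 1) ^ (2 * H - 2)) *
            (((ℓ : ℝ) + 2) ^ (2 * H - 2) - ((M : ℝ) + 1 - (k : ℝ)) ^ (2 * H - 2)))
      atTop := by

  set a := 2 * H - 2 with hadef
  have ha1 : -1 < a := by rw [hadef]; linarith
  have ha2 : a < -(1/2) := by rw [hadef]; linarith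
  have ha0 : a < 0 := by linarith
  have hap : 0 < a + 1 := by linarith
  set c : ℝ := (2:ℝ) ^ a with hcdef
  have hc : 0 < c := Real.rpow_pos_of_pos two_pos a
  set u : ℕ → ℝ := fun M : ℕ =>
      (1 / (M : ℝ)) * ∑ k ∈ Finset.Icc 2 M, ∑ ℓ ∈ Finset.range (M - k + 1),
        (((ℓ : ℝ) + 1) ^ a - ((ℓ : ℝ) + (k : ℝ) - 1) ^ a) *
          (((ℓ : ℝ) + 2) ^ a - ((M : ℝ) + 1 - (k : ℝ)) ^ a) with hudef
  set E : ℕ → ℝ := fun M : ℕ =>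
      (c + 4) / (M : ℝ) + 4 * (M : ℝ) ^ (2 * a + 1) / ((a + 1) ^ 2) with hEdef
  have hE : Tendsto E atTop (nhds 0) := by
    have t1 : Tendsto (fun M : ℕ => (c + 4) / (M : ℝ)) atTop (nhds 0) :=
      tendsto_const_div_atTop_nhds_zero_nat _
    have t2 : Tendsto (fun x : ℝ => x ^ (2 * a + 1)) atTop (nhds 0) := by
      have h := tendsto_rpow_neg_atTop (by linarith : (0:ℝ) < -(2 * a + 1))
      simpa using h
    have t2' : Tendsto (fun M : ℕ => ((M : ℝ)) ^ (2 * a + 1)) atTop (nhds 0) :=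
      t2.comp tendsto_natCast_atTop_atTop
    have t3 : Tendsto (fun M : ℕ => 4 * (M : ℝ) ^ (2 * a + 1) / ((a + 1) ^ 2)) atTop
        (nhds 0) := by
      have h := (t2'.const_mul (4:ℝ)).div_const ((a + 1) ^ 2)
      simpa using h
    have := t1.add t3
    simpa using this
  have hsmall : ∀ᶠ M in atTop, E M < c / 2 :=
    hE.eventually_lt_const (by positivity)
  have hlow : ∀ᶠ M in atTop, c / 2 ≤ u M := by
    filter_upwards [hsmall, eventually_ge_atTop 1] with M hEM hM1
    have hm0 : (0:ℝ) < (M : ℝ) := by exact_mod_cast Nat.pos_of_ne_zero (by omega)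
    have hm1 : (1:ℝ) ≤ (M : ℝ) := by exact_mod_cast hM1
    have hkey := LiminfBlockAux.key_lower a ha0 M hM1
    set S := ∑ ℓ ∈ Finset.range M, ((ℓ : ℝ) + 1) ^ a with hSdef
    have hS0 : 0 ≤ S := Finset.sum_nonneg fun i _ => Real.rpow_nonneg (by positivity) a
    have hSle : S ≤ 1 + (M : ℝ) ^ (a + 1) / (a + 1) :=
      LiminfBlockAux.sum_rpow_le a ha1 ha0 M
    set X := (M : ℝ) ^ (a + 1) / (a + 1) with hXdef
    have hX0 : 0 ≤ X := div_nonneg (Real.rpow_nonneg hm0.le _) hap.le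
    have hPP : (M : ℝ) ^ (2 * a + 1) * (M : ℝ)
        = ((M : ℝ) ^ (a + 1)) * ((M : ℝ) ^ (a + 1)) := by
      have e1 : (M : ℝ) ^ (2 * a + 1) * (M : ℝ) ^ (1:ℝ) = (M : ℝ) ^ (2 * a + 1 + 1) :=
        (Real.rpow_add hm0 _ _).symm
      have e2 : (M : ℝ) ^ (a + 1) * (M : ℝ) ^ (a + 1) = (M : ℝ) ^ (a + 1 + (a + 1)) :=
        (Real.rpow_add hm0 _ _).symm
      rw [Real.rpow_one] at e1
      rw [e1, e2]
      ring_nf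
    have hX2 : X * X = (M : ℝ) ^ (2 * a + 1) * (M : ℝ) / ((a + 1) ^ 2) := by
      rw [hXdef, div_mul_div_comm, ← hPP, pow_two]
    have hdm : (c + 4) / (M : ℝ) * (M : ℝ) = c + 4 := div_mul_cancel₀ _ hm0.ne'
    have hEMul : E M * (M : ℝ) = (c + 4) + 4 * (X * X) := by
      have h4 : 4 * (M : ℝ) ^ (2 * a + 1) / ((a + 1) ^ 2) * (M : ℝ) = 4 * (X * X) := by
        rw [hX2]; ring
      calc E M * (M : ℝ)
          = (c + 4) / (M : ℝ) * (M : ℝ)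
            + 4 * (M : ℝ) ^ (2 * a + 1) / ((a + 1) ^ 2) * (M : ℝ) := by
            rw [hEdef]; ring
        _ = (c + 4) + 4 * (X * X) := by rw [hdm, h4]
    have hS2 : S ^ 2 ≤ (1 + X) ^ 2 := by nlinarith [hSle, hS0, hX0]
    have hfinal : (c - E M) * (M : ℝ) ≤ ((M : ℝ) - 1) * c - 2 * S ^ 2 := by
      nlinarith [hS2, sq_nonneg (1 - X), hEMul]
    have h2 : c - E M ≤ u M := by
      calc c - E M ≤ (((M : ℝ) - 1) * c - 2 * S ^ 2) / (M : ℝ) :=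
            (le_div_iff₀ hm0).mpr hfinal
        _ = 1 / (M : ℝ) * (((M : ℝ) - 1) * c - 2 * S ^ 2) := by ring
        _ ≤ u M := by
            rw [hudef]
            exact mul_le_mul_of_nonneg_left hkey (by positivity)
    have h3 : c / 2 ≤ c - E M := by linarith [hEM]
    exact h3.trans h2
  have hub : ∀ᶠ M in atTop, u M ≤ 1 - 1 / (2 * a + 1) := by
    filter_upwards [eventually_ge_atTop 1] with M hM1
    have hm0 : (0:ℝ) < (M : ℝ) := by exact_mod_cast Nat.pos_of_ne_zero (by omega)
    have hku := LiminfBlockAux.key_upper a ha0 ha2 M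
    calc u M ≤ 1 / (M : ℝ) * ((M : ℝ) * (1 - 1 / (2 * a + 1))) := by
          rw [hudef]
          exact mul_le_mul_of_nonneg_left hku (by positivity)
      _ = 1 - 1 / (2 * a + 1) := by field_simp
  have hcb : Filter.IsCoboundedUnder (· ≥ ·) atTop u :=
    Filter.isCoboundedUnder_ge_of_eventually_le atTop hub
  calc (0:ℝ) < c / 2 := by positivity
    _ ≤ Filter.liminf u atTop := Filter.le_liminf_of_le hcb hlow
end

section
/- Let H ∈ (0, 1/2) and let m ≥ 2 be an integer. Then 0 ≤ ∫₀¹ x^{H−1/2} ((m−1+x)^{H−1/2} − (m+x)^{H−1/2}) dx ≤ (m−1)^{H−3/2} / ((3/2−H)(1/2+H)). -/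
/-!
With `a = H - 1/2 ∈ (-1, 0)`, the map `t ↦ t ^ a` is decreasing with derivative bounded in
absolute value by `-a (m-1)^(a-1)` on `[m-1, ∞)`, so the bracket lies between `0` and
`(1/2 - H)(m-1)^(H-3/2)`. Integrating against `x ^ a` contributes the factor `1/(a+1)`, and the
resulting constant `(1/2 - H)/(1/2 + H)` is at most `1/((3/2 - H)(1/2 + H))` because
`(1/2 - H)(3/2 - H) ≤ 1` for `H ≥ 0`.
-/

open Set MeasureTheory

lemma Real.rpow_sub_rpow_le_of_nonpos {a b c d : ℝ} (ha : a ≤ 0) (hb : 0 < b) (hbc : b ≤ c)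
    (hcd : c ≤ d) : c ^ a - d ^ a ≤ -a * b ^ (a - 1) * (d - c) := by
  have hderiv : ∀ t ∈ interior (Ici b), a * b ^ (a - 1) ≤ deriv (fun t : ℝ => t ^ a) t := by
    intro t ht
    rw [interior_Ici] at ht
    rw [Real.deriv_rpow_const]
    exact mul_le_mul_of_nonpos_left (Real.rpow_le_rpow_of_nonpos hb ht.le (by linarith)) ha
  have hcont : ContinuousOn (fun t : ℝ => t ^ a) (Ici b) := fun t ht =>
    (Real.continuousAt_rpow_const t a (Or.inl (hb.trans_le ht).ne')).continuousWithinAt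
  have hdiff : DifferentiableOn ℝ (fun t : ℝ => t ^ a) (interior (Ici b)) := fun t ht => by
    rw [interior_Ici] at ht
    exact (Real.differentiableAt_rpow_const_of_ne a (hb.trans ht).ne').differentiableWithinAt
  have := (convex_Ici b).mul_sub_le_image_sub_of_le_deriv hcont hdiff hderiv
    c hbc d (hbc.trans hcd) hcd
  linarith

lemma integral_rpow_mul_le_div {a C : ℝ} {g : ℝ → ℝ} (ha : -1 < a)
    (hg : ContinuousOn g (Icc 0 1)) (hgC : ∀ x ∈ Icc (0 : ℝ) 1, g x ≤ C) :
    ∫ x in (0 : ℝ)..1, x ^ a * g x ≤ C / (a + 1) := by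
  have hpow : IntervalIntegrable (fun x : ℝ => x ^ a) volume 0 1 :=
    intervalIntegral.intervalIntegrable_rpow' ha
  have hint : IntervalIntegrable (fun x : ℝ => x ^ a * g x) volume 0 1 :=
    hpow.mul_continuousOn (by rwa [uIcc_of_le zero_le_one])
  calc ∫ x in (0 : ℝ)..1, x ^ a * g x
      ≤ ∫ x in (0 : ℝ)..1, C * x ^ a :=
        intervalIntegral.integral_mono_on zero_le_one hint (hpow.const_mul C) fun x hx => by
          rw [mul_comm C]
          exact mul_le_mul_of_nonneg_left (hgC x hx) (Real.rpow_nonneg hx.1 a)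
    _ = C / (a + 1) := by
      rw [intervalIntegral.integral_const_mul, integral_rpow (Or.inl ha), Real.one_rpow,
        Real.zero_rpow (by linarith)]
      ring

/-- Estimate on the negative-part contribution `α̃^M_{j,k,1}` (case `H < 1/2`):
for integers `m ≥ 2`,
`0 ≤ ∫₀¹ x^{H-1/2}((m-1+x)^{H-1/2} - (m+x)^{H-1/2}) dx
   ≤ (m-1)^{H-3/2}/((3/2-H)(1/2+H))`. -/
theorem alpha_one_integral_bound (H : ℝ) (h0 : 0 < H) (h12 : H < 1 / 2)
    (m : ℕ) (hm : 2 ≤ m) :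
    0 ≤ (∫ x in (0 : ℝ)..1,
        x ^ (H - 1 / 2) * (((m : ℝ) - 1 + x) ^ (H - 1 / 2) - ((m : ℝ) + x) ^ (H - 1 / 2))) ∧
      (∫ x in (0 : ℝ)..1,
        x ^ (H - 1 / 2) * (((m : ℝ) - 1 + x) ^ (H - 1 / 2) - ((m : ℝ) + x) ^ (H - 1 / 2)))
        ≤ ((m : ℝ) - 1) ^ (H - 3 / 2) / ((3 / 2 - H) * (1 / 2 + H)) := by
  have hm1 : (1 : ℝ) ≤ (m : ℝ) - 1 := by
    have : (2 : ℝ) ≤ m := by exact_mod_cast hm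
    linarith
  have hdiff_nonneg : ∀ x ∈ Icc (0 : ℝ) 1,
      0 ≤ ((m : ℝ) - 1 + x) ^ (H - 1 / 2) - ((m : ℝ) + x) ^ (H - 1 / 2) := fun x hx =>
    sub_nonneg.2 (Real.rpow_le_rpow_of_nonpos (by linarith [hx.1]) (by linarith) (by linarith))
  have hdiff_le : ∀ x ∈ Icc (0 : ℝ) 1,
      ((m : ℝ) - 1 + x) ^ (H - 1 / 2) - ((m : ℝ) + x) ^ (H - 1 / 2)
        ≤ (1 / 2 - H) * ((m : ℝ) - 1) ^ (H - 3 / 2) := fun x hx => by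
    have := Real.rpow_sub_rpow_le_of_nonpos (a := H - 1 / 2) (by linarith) (by linarith)
      (le_add_of_nonneg_right hx.1) (by linarith : (m : ℝ) - 1 + x ≤ m + x)
    convert this using 1
    ring_nf
  have hcont : ContinuousOn
      (fun x : ℝ => ((m : ℝ) - 1 + x) ^ (H - 1 / 2) - ((m : ℝ) + x) ^ (H - 1 / 2)) (Icc 0 1) :=
    ContinuousOn.sub
      ((continuousOn_const.add continuousOn_id).rpow_const fun x hx =>
        Or.inl (by simp only [Pi.add_apply, id]; linarith [hx.1]))
      ((continuousOn_const.add continuousOn_id).rpow_const fun x hx =>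
        Or.inl (by simp only [Pi.add_apply, id]; linarith [hx.1]))
  refine ⟨intervalIntegral.integral_nonneg zero_le_one fun x hx =>
    mul_nonneg (Real.rpow_nonneg hx.1 _) (hdiff_nonneg x hx), ?_⟩
  have hP : 0 ≤ ((m : ℝ) - 1) ^ (H - 3 / 2) := Real.rpow_nonneg (by linarith) _
  calc _ ≤ (1 / 2 - H) * ((m : ℝ) - 1) ^ (H - 3 / 2) / (H - 1 / 2 + 1) :=
        integral_rpow_mul_le_div (by linarith) hcont hdiff_le
    _ ≤ ((m : ℝ) - 1) ^ (H - 3 / 2) / ((3 / 2 - H) * (1 / 2 + H)) := by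
      rw [div_le_div_iff₀ (by linarith) (by nlinarith)]
      nlinarith [mul_nonneg hP (sq_nonneg H)]
end
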